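/- (From d-links to vertex links.) Let 1 ≤ d ≤ k−1. There exists c > 0 depending only on k such that for all 0 < α ≤ c, 0 < γ ≤ c and all δ > 0 the following holds. Let H be a k-graph on t vertices with α-perturbed minimum relative d-degree at least δ. Suppose that for every edge S of ∂_d(H) the link graph L(S) contains a fractional matching of size at least (1/k + γ)·t. Then for every vertex v contained in some edge of H (i.e., every edge {v} of ∂_1(H)), the link graph L({v}) contains a fractional matching of size at least (1/k + γ)·t. -/

import Mathlib

open Finset

variable {A : Type*} [DecidableEq A]

/-- The set of vertices occupying positions `i, …, i+k-1` of the walk `w`. -/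
def walkEdgeAt (k : ℕ) (w : List A) (i : ℕ) : Finset A :=
  ((w.drop i).take k).toFinset

/-- `w` is a tight walk in the `k`-graph with edge set `E`: it has at least `k`
vertices and every `k` consecutive vertices form an edge of `E`. -/
def IsTightWalk (k : ℕ) (E : Finset (Finset A)) (w : List A) : Prop :=
  k ≤ w.length ∧ ∀ i, i + k ≤ w.length → walkEdgeAt k w i ∈ E

/-- The edge `e` appears on the walk `w` (as `k` consecutive vertices). -/
def EdgeOnWalk (k : ℕ) (w : List A) (e : Finset A) : Prop :=
  ∃ i, i + k ≤ w.length ∧ walkEdgeAt k w i = e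

/-- A `k`-uniform edge set is tightly connected if any two of its edges lie on a
common tight walk all of whose edges belong to it. -/
def TightlyConnected (k : ℕ) (E : Finset (Finset A)) : Prop :=
  ∀ e₁ ∈ E, ∀ e₂ ∈ E, ∃ w : List A, IsTightWalk k E w ∧ EdgeOnWalk k w e₁ ∧ EdgeOnWalk k w e₂

/-- `w` is a closed tight walk: every cyclic interval of `k` consecutive vertices
forms an edge of `E`.  Its length is `w.length`. -/
def IsClosedTightWalk (k : ℕ) (E : Finset (Finset A)) (w : List A) : Prop :=
  k ≤ w.length ∧ ∀ i < w.length, ((w.rotate i).take k).toFinset ∈ E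

/-- A tight Hamilton cycle: a cyclic ordering of all the vertices in which every `k`
cyclically consecutive vertices form an edge. -/
def HasTightHamCycle (k : ℕ) (V : Finset A) (E : Finset (Finset A)) : Prop :=
  ∃ w : List A, w.Nodup ∧ w.toFinset = V ∧ IsClosedTightWalk k E w

/-- The `j`-th shadow: all `j`-element sets contained in some edge. -/
def shadow (j : ℕ) (E : Finset (Finset A)) : Finset (Finset A) :=
  E.biUnion fun e => e.powersetCard j

/-- The link graph of `S`: the `(k-d)`-graph whose edges are `e \ S` for edges `e ⊇ S`. -/
def link (S : Finset A) (E : Finset (Finset A)) : Finset (Finset A) :=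
  (E.filter fun e => S ⊆ e).image fun e => e \ S

/-- `E` has a fractional matching of size at least `m`. -/
def HasFracMatching (E : Finset (Finset A)) (m : ℝ) : Prop :=
  ∃ w : Finset A → ℝ,
    (∀ e ∈ E, 0 ≤ w e ∧ w e ≤ 1) ∧
    (∀ v : A, ∑ e ∈ E.filter (fun e' => v ∈ e'), w e ≤ 1) ∧
    m ≤ ∑ e ∈ E, w e

/-- `E` has a `b`-fractional matching of size at least `m` (vertex constraints on `V`). -/
def HasBFracMatching (V : Finset A) (E : Finset (Finset A)) (b : A → ℝ) (m : ℝ) : Prop :=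
  ∃ w : Finset A → ℝ,
    (∀ e ∈ E, 0 ≤ w e ∧ w e ≤ 1) ∧
    (∀ v ∈ V, ∑ e ∈ E.filter (fun e' => v ∈ e'), w e ≤ b v) ∧
    m ≤ ∑ e ∈ E, w e

/-- `γ`-robustly matchable: every vertex weighting with values in `[1-γ,1]` is realised
exactly by an edge weighting with values in `[0,1]`. -/
def RobustlyMatchable (γ : ℝ) (V : Finset A) (E : Finset (Finset A)) : Prop :=
  ∀ b : A → ℝ, (∀ v ∈ V, 1 - γ ≤ b v ∧ b v ≤ 1) →
    ∃ w : Finset A → ℝ, (∀ e ∈ E, 0 ≤ w e ∧ w e ≤ 1) ∧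
      ∀ v ∈ V, ∑ e ∈ E.filter (fun e' => v ∈ e'), w e = b v

/-- A switcher: an edge `e` with a central vertex `a` such that for every `b ∈ e`
there is `c ∉ e` with `(e ∪ {c}) \ {a}` and `(e ∪ {c}) \ {b}` both edges. -/
def HasSwitcher (C : Finset (Finset A)) : Prop :=
  ∃ e ∈ C, ∃ a ∈ e, ∀ b ∈ e, ∃ c, c ∉ e ∧
    insert c (e.erase a) ∈ C ∧ insert c (e.erase b) ∈ C

/-- An arc for the `d`-vicinity `C` of the `k`-graph with edge set `E`: a tuple of
`k+1` distinct vertices `v₁, …, v_{k+1}` with `{v₁,…,v_d} ∈ ∂_d`,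
`{v_{d+1},…,v_k} ∈ C {v₁,…,v_d}`, `{v₂,…,v_{d+1}} ∈ ∂_d` and
`{v_{d+2},…,v_{k+1}} ∈ C {v₂,…,v_{d+1}}`. -/
def HasArc (k d : ℕ) (E : Finset (Finset A)) (C : Finset A → Finset (Finset A)) : Prop :=
  ∃ l : List A, l.length = k + 1 ∧ l.Nodup ∧
    (l.take d).toFinset ∈ shadow d E ∧
    ((l.drop d).take (k - d)).toFinset ∈ C ((l.take d).toFinset) ∧
    ((l.drop 1).take d).toFinset ∈ shadow d E ∧
    (l.drop (d + 1)).toFinset ∈ C (((l.drop 1).take d).toFinset)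

/-- The `k`-graph generated by a `d`-vicinity: all sets `B ∪ S` with `S ∈ ∂_d(E)`
and `B ∈ C S`. -/
def generatedEdges (d : ℕ) (E : Finset (Finset A)) (C : Finset A → Finset (Finset A)) :
    Finset (Finset A) :=
  (shadow d E).biUnion fun S => (C S).image fun B => B ∪ S

/-- `α`-perturbed minimum relative `d`-degree at least `δ` for a `k`-graph on vertex
set `V` with edge set `E`. -/
def PerturbedDegLB (k d : ℕ) (a δ : ℝ) (V : Finset A) (E : Finset (Finset A)) : Prop :=
  ∀ j : ℕ, 1 ≤ j → j ≤ d →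
    (∀ S ∈ shadow j E,
      δ * (((V.card - j).choose (k - j) : ℕ) : ℝ) ≤ ((E.filter fun e => S ⊆ e).card : ℝ)) ∧
    ((((V.powersetCard j).filter fun S => S ∉ shadow j E).card : ℝ)
        ≤ a * ((V.card.choose j : ℕ) : ℝ)) ∧
    (∀ T : Finset A, (T ∈ shadow (j - 1) E ∨ (j = 1 ∧ T = ∅)) →
      ((((V.powersetCard j).filter fun S => T ⊆ S ∧ S ∉ shadow j E).card : ℝ)
        < a * ((V.card : ℝ) - (j : ℝ) + 1)))

/-- A `(γ, δ)`-Hamilton `d`-vicinity of a `k`-graph on `t = V.card` vertices. -/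
def IsHamVicinity (k d : ℕ) (γ δ : ℝ) (V : Finset A) (E : Finset (Finset A))
    (C : Finset A → Finset (Finset A)) : Prop :=
  (∀ S ∈ shadow d E, C S ⊆ link S E) ∧
  (∀ S ∈ shadow d E, TightlyConnected (k - d) (C S)) ∧
  (∀ S ∈ shadow d E, ∀ S' ∈ shadow d E, (C S ∩ C S').Nonempty) ∧
  (∀ S ∈ shadow d E, HasSwitcher (C S)) ∧
  HasArc k d E C ∧
  (∀ S ∈ shadow d E, HasFracMatching (C S) ((1 / (k : ℝ) + γ) * (V.card : ℝ))) ∧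
  (∀ S ∈ shadow d E, (1 - δ + γ) * ((V.card.choose (k - d) : ℕ) : ℝ) ≤ ((C S).card : ℝ))

/-- An `(a, γ, δ)`-Hamilton framework: a subgraph on vertex set `VH` with edge set `EH`
of a `k`-graph on vertex set `VR`, satisfying (F1)–(F5). -/
def IsHamFramework (k : ℕ) (a γ δ : ℝ) (VR VH : Finset A) (EH : Finset (Finset A)) : Prop :=
  (1 - a) * (VR.card : ℝ) ≤ (VH.card : ℝ) ∧
  TightlyConnected k EH ∧
  (∃ w : List A, IsClosedTightWalk k EH w ∧ w.length % k = 1 % k) ∧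
  RobustlyMatchable γ VH EH ∧
  (∀ v ∈ VH, (1 - δ + γ) * (((VH.card - 1).choose (k - 1) : ℕ) : ℝ)
      ≤ ((EH.filter fun e => v ∈ e).card : ℝ))

/-- A tight component: an edge-maximal tightly connected subgraph. -/
def IsTightComponent (k : ℕ) (E C : Finset (Finset A)) : Prop :=
  C ⊆ E ∧ TightlyConnected k C ∧
    ∀ C' : Finset (Finset A), C ⊆ C' → C' ⊆ E → TightlyConnected k C' → C' = C

/-- `δ` has the `(k,d)`-Hamilton-cycle property. -/
def HamCycleProp (k d : ℕ) (δ : ℝ) : Prop :=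
  ∀ μ : ℝ, 0 < μ → ∃ n₀ : ℕ, ∀ (B : Type) [DecidableEq B],
    ∀ (V : Finset B) (E : Finset (Finset B)),
      n₀ ≤ V.card → (∀ e ∈ E, e ⊆ V ∧ e.card = k) →
      (∀ S ⊆ V, S.card = d →
        (δ + μ) * (((V.card - d).choose (k - d) : ℕ) : ℝ)
          ≤ ((E.filter fun e => S ⊆ e).card : ℝ)) →
      HasTightHamCycle k V E

/-- `δ` has the `(k,d)`-Hamilton-framework property. -/
def HamFrameworkProp (k d : ℕ) (δ : ℝ) : Prop :=
  ∀ μ : ℝ, 0 < μ → ∃ γ₀ : ℝ, 0 < γ₀ ∧ ∀ γ : ℝ, 0 < γ → γ ≤ γ₀ →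
    ∃ α₀ : ℝ, 0 < α₀ ∧ ∀ a : ℝ, 0 < a → a ≤ α₀ →
      ∃ ε₀ : ℝ, 0 < ε₀ ∧ ∀ ε : ℝ, 0 < ε → ε ≤ ε₀ →
        ∃ t₀ : ℕ, ∀ t : ℕ, t₀ ≤ t →
          ∀ (B : Type) [DecidableEq B], ∀ (VR : Finset B) (ER : Finset (Finset B)),
            VR.card = t → (∀ e ∈ ER, e ⊆ VR ∧ e.card = k) →
            (∀ S ⊆ VR, S.card = d →
              (δ + μ) * (((t - d).choose (k - d) : ℕ) : ℝ)
                ≤ ((ER.filter fun e => S ⊆ e).card : ℝ)) →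
            ∀ I : Finset (Finset B), I ⊆ ER → (I.card : ℝ) ≤ ε * ((t.choose k : ℕ) : ℝ) →
              ∃ (VH : Finset B) (EH : Finset (Finset B)),
                VH ⊆ VR ∧ EH ⊆ ER ∧ (∀ e ∈ EH, e ⊆ VH) ∧ (∀ e ∈ EH, e ∉ I) ∧
                IsHamFramework k a γ δ VR VH EH

/-- `δ` has the `(k,d)`-Hamilton-vicinity property. -/
def HamVicinityProp (k d : ℕ) (δ : ℝ) : Prop :=
  ∀ μ : ℝ, 0 < μ → ∃ γ₀ : ℝ, 0 < γ₀ ∧ ∀ γ : ℝ, 0 < γ → γ ≤ γ₀ →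
    ∃ α₀ : ℝ, 0 < α₀ ∧ ∀ a : ℝ, 0 < a → a ≤ α₀ →
      ∃ t₀ : ℕ, ∀ t : ℕ, t₀ ≤ t →
        ∀ (B : Type) [DecidableEq B], ∀ (V : Finset B) (E : Finset (Finset B)),
          V.card = t → (∀ e ∈ E, e ⊆ V ∧ e.card = k) →
          PerturbedDegLB k d a (δ + μ) V E →
          (∀ v ∈ V, ∃ e ∈ E, v ∈ e) →
          ∃ C : Finset B → Finset (Finset B), IsHamVicinity k d γ δ V E C

/-!
Downward induction on `j = |S|`, from `d` to `1`. Fix a `j`-set `S` of the shadow and let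
`m = (1/k + γ) t`. By (P3), all but fewer than `α (t - j)` vertices `u ∉ S` extend `S` to a
`(j+1)`-set of the shadow, and the link of `u` in the `(k-j)`-graph `L(S)` is `L(S ∪ {u})`, which
has a fractional matching of size `m` by induction. For `α, γ ≤ 1/(4k³)` there are at least
`(k - j) m` such vertices. This forces a fractional matching of size `m` in `L(S)`: a maximum one
of smaller size has total load `(k - j) · size < (k - j) m`, so it leaves one of those vertices `u`
unsaturated, and mixing in the matching of the link of `u`, lifted to the edges through `u`,
enlarges it.
-/

def IsFracMatching (G : Finset (Finset A)) (w : Finset A → ℝ) : Prop :=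
  (∀ f ∈ G, 0 ≤ w f ∧ w f ≤ 1) ∧ ∀ v, ∑ f ∈ G with v ∈ f, w f ≤ 1

theorem hasFracMatching_iff {G : Finset (Finset A)} {m : ℝ} :
    HasFracMatching G m ↔ ∃ w, IsFracMatching G w ∧ m ≤ ∑ f ∈ G, w f := by
  simp only [HasFracMatching, IsFracMatching, and_assoc]

theorem mem_shadow_iff_exists {j : ℕ} {E : Finset (Finset A)} {S : Finset A} :
    S ∈ shadow j E ↔ ∃ e ∈ E, S ⊆ e ∧ S.card = j := by
  simp [_root_.shadow, mem_powersetCard]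

theorem sum_sum_filter_mem_eq_mul_sum {V : Finset A} {G : Finset (Finset A)} {r : ℕ}
    (hG : ∀ f ∈ G, f ⊆ V ∧ f.card = r) (w : Finset A → ℝ) :
    ∑ v ∈ V, ∑ f ∈ G with v ∈ f, w f = r * ∑ f ∈ G, w f := by
  rw [Finset.mul_sum]
  simp_rw [Finset.sum_filter]
  rw [Finset.sum_comm]
  refine Finset.sum_congr rfl fun f hf => ?_
  rw [Finset.sum_ite_mem, Finset.inter_eq_right.mpr (hG f hf).1, Finset.sum_const, nsmul_eq_mul,
    (hG f hf).2]

theorem HasFracMatching.mul_le_card {V : Finset A} {G : Finset (Finset A)} {r : ℕ} {m : ℝ}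
    (hG : ∀ f ∈ G, f ⊆ V ∧ f.card = r) (h : HasFracMatching G m) : r * m ≤ V.card := by
  obtain ⟨w, ⟨-, hload⟩, hm⟩ := hasFracMatching_iff.mp h
  calc (r : ℝ) * m ≤ r * ∑ f ∈ G, w f := by gcongr
    _ = ∑ v ∈ V, ∑ f ∈ G with v ∈ f, w f := (sum_sum_filter_mem_eq_mul_sum hG w).symm
    _ ≤ ∑ _v ∈ V, 1 := Finset.sum_le_sum fun v _ => hload v
    _ = V.card := by simp

theorem IsFracMatching.exists_mem_sum_filter_lt_one {V U : Finset A} {G : Finset (Finset A)}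
    {r : ℕ} {w : Finset A → ℝ} (hw : IsFracMatching G w) (hG : ∀ f ∈ G, f ⊆ V ∧ f.card = r)
    (hUV : U ⊆ V) (hU : r * ∑ f ∈ G, w f < U.card) :
    ∃ u ∈ U, ∑ f ∈ G with u ∈ f, w f < 1 := by
  by_contra! h
  have hload_nonneg : ∀ v ∈ V, 0 ≤ ∑ f ∈ G with v ∈ f, w f :=
    fun v _ => Finset.sum_nonneg fun f hf => (hw.1 f (Finset.mem_filter.mp hf).1).1
  have : (U.card : ℝ) ≤ r * ∑ f ∈ G, w f :=
    calc (U.card : ℝ) = ∑ _u ∈ U, 1 := by simp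
      _ ≤ ∑ u ∈ U, ∑ f ∈ G with u ∈ f, w f := Finset.sum_le_sum h
      _ ≤ ∑ v ∈ V, ∑ f ∈ G with v ∈ f, w f :=
        Finset.sum_le_sum_of_subset_of_nonneg hUV fun v hv _ => hload_nonneg v hv
      _ = r * ∑ f ∈ G, w f := sum_sum_filter_mem_eq_mul_sum hG w
  linarith

theorem IsFracMatching.indicator {G : Finset (Finset A)} {w : Finset A → ℝ}
    (hw : IsFracMatching G w) : IsFracMatching G fun f => if f ∈ G then w f else 0 := by
  refine ⟨fun f hf => by simpa [hf] using hw.1 f hf, fun v => ?_⟩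
  calc ∑ f ∈ G with v ∈ f, (if f ∈ G then w f else 0) = ∑ f ∈ G with v ∈ f, w f :=
        Finset.sum_congr rfl fun f hf => if_pos (Finset.mem_filter.mp hf).1
    _ ≤ 1 := hw.2 v

theorem isCompact_setOf_isFracMatching (G : Finset (Finset A)) :
    IsCompact {w : Finset A → ℝ | IsFracMatching G w ∧ ∀ f ∉ G, w f = 0} := by
  have hbox : IsCompact (Set.univ.pi fun f => if f ∈ G then Set.Icc (0 : ℝ) 1 else {0}) :=
    isCompact_univ_pi fun f => by split_ifs; exacts [isCompact_Icc, isCompact_singleton]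
  refine hbox.of_isClosed_subset ?_ ?_
  · simp only [IsFracMatching, Set.ofPred_and, Set.ofPred_forall]
    refine ((isClosed_biInter fun f _ => ?_).inter (isClosed_iInter fun v => ?_)).inter
      (isClosed_biInter fun f _ => ?_)
    · exact (isClosed_le continuous_const (continuous_apply f)).inter
        (isClosed_le (continuous_apply f) continuous_const)
    · exact isClosed_le (continuous_finsetSum _ fun f _ => continuous_apply f) continuous_const
    · exact isClosed_eq (continuous_apply f) continuous_const
  · rintro w ⟨hw, hw0⟩ f -
    by_cases hf : f ∈ G
    · simpa [hf] using hw.1 f hf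
    · simpa [hf] using hw0 f hf

theorem exists_isFracMatching_forall_sum_le (G : Finset (Finset A)) :
    ∃ w, IsFracMatching G w ∧
      ∀ w', IsFracMatching G w' → ∑ f ∈ G, w' f ≤ ∑ f ∈ G, w f := by
  have hzero : (0 : Finset A → ℝ) ∈ {w | IsFracMatching G w ∧ ∀ f ∉ G, w f = 0} :=
    ⟨⟨fun f _ => by simp, fun v => by simp⟩, fun f _ => rfl⟩
  obtain ⟨w, ⟨hw, -⟩, hmax⟩ := (isCompact_setOf_isFracMatching G).exists_isMaxOn ⟨0, hzero⟩
    (continuous_finsetSum G fun f _ => continuous_apply f).continuousOn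
  refine ⟨w, hw, fun w' hw' => ?_⟩
  calc ∑ f ∈ G, w' f = ∑ f ∈ G, (if f ∈ G then w' f else 0) :=
        Finset.sum_congr rfl fun f hf => (if_pos hf).symm
    _ ≤ ∑ f ∈ G, w f := hmax ⟨hw'.indicator, fun f hf => if_neg hf⟩

/-- Moving towards `p` by `θ / m`, where `θ` is the slack of `w` at `u`, keeps the load at `u`
at most `1` because the load of `p` there is at most its total `m`. -/
theorem IsFracMatching.exists_sum_lt {G : Finset (Finset A)} {w p : Finset A → ℝ} {u : A}
    {m : ℝ} (hw : IsFracMatching G w) (hu : ∑ f ∈ G with u ∈ f, w f < 1)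
    (hp : ∀ f ∈ G, 0 ≤ p f ∧ p f ≤ 1) (hpv : ∀ v ≠ u, ∑ f ∈ G with v ∈ f, p f ≤ 1)
    (hpsum : ∑ f ∈ G, p f = m) (hm : 1 ≤ m) (hlt : ∑ f ∈ G, w f < m) :
    ∃ w', IsFracMatching G w' ∧ ∑ f ∈ G, w f < ∑ f ∈ G, w' f := by
  set θ := 1 - ∑ f ∈ G with u ∈ f, w f with hθ
  set ε := θ / m
  have hm0 : 0 < m := by linarith
  have hload_nonneg : ∀ v, 0 ≤ ∑ f ∈ G with v ∈ f, w f :=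
    fun v => Finset.sum_nonneg fun f hf => (hw.1 f (Finset.mem_filter.mp hf).1).1
  have hε0 : 0 < ε := div_pos (by linarith) hm0
  have hε1 : ε ≤ 1 := (div_le_one hm0).mpr (by linarith [hload_nonneg u])
  have hεm : ε * m = θ := div_mul_cancel₀ θ hm0.ne'
  have hsum : ∀ s : Finset (Finset A), ∑ f ∈ s, ((1 - ε) * w f + ε * p f)
      = (1 - ε) * ∑ f ∈ s, w f + ε * ∑ f ∈ s, p f := fun s => by
    rw [Finset.sum_add_distrib, Finset.mul_sum, Finset.mul_sum]
  refine ⟨fun f => (1 - ε) * w f + ε * p f, ⟨fun f hf => ?_, fun v => ?_⟩, ?_⟩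
  · obtain ⟨hw0, hw1⟩ := hw.1 f hf
    obtain ⟨hp0, hp1⟩ := hp f hf
    constructor <;> nlinarith
  · rw [hsum]
    by_cases hvu : v = u
    · subst hvu
      have hpu : ∑ f ∈ G with v ∈ f, p f ≤ m := hpsum ▸
        Finset.sum_le_sum_of_subset_of_nonneg (Finset.filter_subset _ _)
          fun f hf _ => (hp f hf).1
      nlinarith [mul_le_mul_of_nonneg_left hpu hε0.le, mul_nonneg hε0.le (hload_nonneg v)]
    · nlinarith [hw.2 v, hpv v hvu, hload_nonneg v]
  · rw [hsum, hpsum]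
    nlinarith

theorem sum_link_singleton (G : Finset (Finset A)) (u : A) (g : Finset A → ℝ) :
    ∑ X ∈ link {u} G, g X = ∑ f ∈ G with u ∈ f, g (f \ {u}) := by
  rw [link, Finset.sum_image]
  · simp only [Finset.singleton_subset_iff]
  · intro f₁ h₁ f₂ h₂ h
    simp only [Finset.coe_filter, Finset.singleton_subset_iff, Set.mem_ofPred_eq] at h₁ h₂
    rw [← Finset.insert_erase h₁.2, ← Finset.insert_erase h₂.2]
    simp only [Finset.sdiff_singleton_eq_erase] at h
    rw [h]

theorem HasFracMatching.exists_sum_eq {G : Finset (Finset A)} {m : ℝ} (h : HasFracMatching G m)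
    (hm : 0 < m) : ∃ w, IsFracMatching G w ∧ ∑ f ∈ G, w f = m := by
  obtain ⟨w, ⟨hw, hload⟩, hmw⟩ := hasFracMatching_iff.mp h
  set c := m / ∑ f ∈ G, w f
  have hc0 : 0 ≤ c := div_nonneg hm.le (hm.le.trans hmw)
  have hc1 : c ≤ 1 := div_le_one_of_le₀ hmw (hm.le.trans hmw)
  refine ⟨fun f => c * w f, ⟨fun f hf => ?_, fun v => ?_⟩, ?_⟩
  · exact ⟨mul_nonneg hc0 (hw f hf).1, mul_le_one₀ hc1 (hw f hf).1 (hw f hf).2⟩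
  · rw [← Finset.mul_sum]
    exact mul_le_one₀ hc1 (Finset.sum_nonneg fun f hf => (hw f (Finset.mem_filter.mp hf).1).1)
      (hload v)
  · rw [← Finset.mul_sum]
    exact div_mul_cancel₀ m (hm.trans_le hmw).ne'

theorem HasFracMatching.exists_lift_of_link {G : Finset (Finset A)} {u : A} {m : ℝ}
    (h : HasFracMatching (link {u} G) m) (hm : 0 < m) :
    ∃ p : Finset A → ℝ, (∀ f ∈ G, 0 ≤ p f ∧ p f ≤ 1) ∧
      (∀ v ≠ u, ∑ f ∈ G with v ∈ f, p f ≤ 1) ∧ ∑ f ∈ G, p f = m := by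
  obtain ⟨w, ⟨hw, hload⟩, hsum⟩ := h.exists_sum_eq hm
  have hmem : ∀ f ∈ G, u ∈ f → f \ {u} ∈ link {u} G := fun f hf hu =>
    Finset.mem_image_of_mem _ (Finset.mem_filter.mpr ⟨hf, Finset.singleton_subset_iff.mpr hu⟩)
  refine ⟨fun f => if u ∈ f then w (f \ {u}) else 0, fun f hf => ?_, fun v hv => ?_, ?_⟩
  · dsimp only
    split_ifs with hu
    exacts [hw _ (hmem f hf hu), ⟨le_rfl, zero_le_one⟩]
  · calc ∑ f ∈ G with v ∈ f, (if u ∈ f then w (f \ {u}) else 0)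
        = ∑ f ∈ G with u ∈ f, (if v ∈ f \ {u} then w (f \ {u}) else 0) := by
          rw [Finset.sum_filter, Finset.sum_filter]
          refine Finset.sum_congr rfl fun f _ => ?_
          by_cases hvf : v ∈ f <;> by_cases huf : u ∈ f <;> simp [hvf, huf, hv]
      _ = ∑ X ∈ link {u} G with v ∈ X, w X := by
          rw [Finset.sum_filter (fun X => v ∈ X), sum_link_singleton]
      _ ≤ 1 := hload v
  · rw [← Finset.sum_filter, ← sum_link_singleton, hsum]

theorem hasFracMatching_of_hasFracMatching_link {V U : Finset A} {G : Finset (Finset A)} {r : ℕ}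
    {m : ℝ} (hr : 0 < r) (hm : 1 ≤ m) (hG : ∀ f ∈ G, f ⊆ V ∧ f.card = r) (hUV : U ⊆ V)
    (hU : ∀ u ∈ U, HasFracMatching (link {u} G) m) (hcard : r * m ≤ U.card) :
    HasFracMatching G m := by
  obtain ⟨w, hw, hmax⟩ := exists_isFracMatching_forall_sum_le G
  refine hasFracMatching_iff.mpr ⟨w, hw, ?_⟩
  by_contra! hlt
  obtain ⟨u, huU, hu⟩ := hw.exists_mem_sum_filter_lt_one hG hUV <|
    (mul_lt_mul_of_pos_left hlt (Nat.cast_pos.mpr hr)).trans_le hcard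
  obtain ⟨p, hp, hpv, hpsum⟩ := (hU u huU).exists_lift_of_link (by linarith)
  obtain ⟨w', hw', hgt⟩ := hw.exists_sum_lt hu hp hpv hpsum hm hlt
  exact (hmax w' hw').not_gt hgt

theorem subset_sdiff_and_card_of_mem_link {k : ℕ} {V S X : Finset A} {E : Finset (Finset A)}
    (hE : ∀ e ∈ E, e ⊆ V ∧ e.card = k) (hX : X ∈ link S E) :
    X ⊆ V \ S ∧ X.card = k - S.card := by
  obtain ⟨e, he, rfl⟩ := Finset.mem_image.mp hX
  obtain ⟨heE, hSe⟩ := Finset.mem_filter.mp he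
  exact ⟨Finset.sdiff_subset_sdiff (hE e heE).1 subset_rfl,
    by rw [Finset.card_sdiff_of_subset hSe, (hE e heE).2]⟩

theorem link_singleton_link {u : A} {S : Finset A} (hu : u ∉ S) (E : Finset (Finset A)) :
    link {u} (link S E) = link (insert u S) E := by
  ext X
  simp only [link, Finset.mem_image, Finset.mem_filter, Finset.singleton_subset_iff]
  constructor
  · rintro ⟨Y, ⟨⟨e, ⟨he, hSe⟩, rfl⟩, hue⟩, rfl⟩
    refine ⟨e, ⟨he, Finset.insert_subset (Finset.mem_sdiff.mp hue).1 hSe⟩, ?_⟩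
    rw [sdiff_sdiff_left, Finset.sup_eq_union, Finset.union_comm, ← Finset.insert_eq]
  · rintro ⟨e, ⟨he, hie⟩, rfl⟩
    rw [Finset.insert_subset_iff] at hie
    refine ⟨e \ S, ⟨⟨e, ⟨he, hie.2⟩, rfl⟩, Finset.mem_sdiff.mpr ⟨hie.1, hu⟩⟩, ?_⟩
    rw [sdiff_sdiff_left, Finset.sup_eq_union, Finset.union_comm, ← Finset.insert_eq]

theorem card_filter_insert_notMem_le {V S : Finset A} (hSV : S ⊆ V) (F : Finset (Finset A)) :
    #{u ∈ V \ S | insert u S ∉ F} ≤ #{T ∈ V.powersetCard (S.card + 1) | S ⊆ T ∧ T ∉ F} := by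
  refine Finset.card_le_card_of_injOn (fun u => insert u S) (fun u hu => ?_) ?_
  · simp only [Finset.coe_filter, Finset.mem_sdiff, Set.mem_ofPred_eq] at hu
    simp only [Finset.coe_filter, Finset.mem_powersetCard, Set.mem_ofPred_eq]
    exact ⟨⟨Finset.insert_subset hu.1.1 hSV, Finset.card_insert_of_notMem hu.1.2⟩,
      Finset.subset_insert u S, hu.2⟩
  · intro u₁ h₁ u₂ h₂ h
    simp only [Finset.coe_filter, Finset.mem_sdiff, Set.mem_ofPred_eq] at h₁ h₂
    have := Finset.ext_iff.mp h u₁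
    simp only [Finset.mem_insert, true_or, true_iff] at this
    exact this.resolve_right h₁.1.2

theorem sub_mul_inv_add_mul_le_one_sub_mul_sub {K T J a g : ℝ} (hJ : 1 ≤ J) (hJK : J ≤ K)
    (hT : K + 1 ≤ T) (ha0 : 0 ≤ a) (hg0 : 0 ≤ g) (ha : a ≤ 1 / (4 * K ^ 3))
    (hg : g ≤ 1 / (4 * K ^ 3)) :
    (K - J) * ((1 / K + g) * T) ≤ (1 - a) * (T - J) := by
  have hK : 1 ≤ K := hJ.trans hJK
  have hK0 : 0 < K := by linarith
  rw [le_div_iff₀ (by positivity)] at ha hg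
  have hK23 : K ^ 2 ≤ K ^ 3 := pow_le_pow_right₀ hK (by norm_num)
  have hX : 4 * K * (a * K * (T - J)) ≤ T :=
    calc 4 * K * (a * K * (T - J)) = a * (4 * K ^ 2) * (T - J) := by ring
      _ ≤ a * (4 * K ^ 3) * (T - J) := by gcongr; linarith
      _ ≤ 1 * (T - J) := by gcongr; linarith
      _ ≤ T := by linarith
  have hY : 4 * K * (g * K * (K - J) * T) ≤ T :=
    calc 4 * K * (g * K * (K - J) * T) = g * (4 * K ^ 2) * ((K - J) * T) := by ring
      _ ≤ g * (4 * K ^ 2) * (K * T) := by gcongr <;> linarith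
      _ = g * (4 * K ^ 3) * T := by ring
      _ ≤ 1 * T := by gcongr; linarith
      _ = T := one_mul T
  have hTK : T ≤ 2 * K * (T - K) := by nlinarith
  have key : (1 - a) * (T - J) - (K - J) * ((1 / K + g) * T)
      = (J * (T - K) - a * K * (T - J) - g * K * (K - J) * T) / K := by
    field_simp
    ring
  rw [← sub_nonneg, key]
  apply div_nonneg _ hK0.le
  nlinarith

theorem PerturbedDegLB.card_filter_notMem_shadow_lt {k d j : ℕ} {a δ : ℝ} {V T : Finset A}
    {E : Finset (Finset A)} (h : PerturbedDegLB k d a δ V E) (hjd : j < d)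
    (hT : T ∈ shadow j E) :
    (#{S ∈ V.powersetCard (j + 1) | T ⊆ S ∧ S ∉ shadow (j + 1) E} : ℝ)
      < a * (V.card - j) := by
  convert (h (j + 1) (by omega) hjd).2.2 T (Or.inl (by simpa using hT)) using 2
  push_cast
  ring

theorem hasFracMatching_link_of_succ {k j : ℕ} {a m : ℝ} {V : Finset A}
    {E : Finset (Finset A)} (hE : ∀ e ∈ E, e ⊆ V ∧ e.card = k) (hjk : j < k) (hm : 1 ≤ m)
    (hbad : ∀ T ∈ shadow j E,
      (#{S ∈ V.powersetCard (j + 1) | T ⊆ S ∧ S ∉ shadow (j + 1) E} : ℝ)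
        < a * (V.card - j))
    (hsize : ((k : ℝ) - j) * m ≤ (1 - a) * (V.card - j))
    (ih : ∀ S ∈ shadow (j + 1) E, HasFracMatching (link S E) m) :
    ∀ S ∈ shadow j E, HasFracMatching (link S E) m := by
  intro S hS
  obtain ⟨e, he, hSe, hScard⟩ := mem_shadow_iff_exists.mp hS
  have hSV : S ⊆ V := hSe.trans (hE e he).1
  set U := {u ∈ V \ S | insert u S ∈ shadow (j + 1) E}
  have hU : (1 - a) * (V.card - j) ≤ U.card := by
    have hsplit := Finset.card_filter_add_card_filter_not (s := V \ S)
      (fun u => insert u S ∈ shadow (j + 1) E)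
    rw [Finset.card_sdiff_of_subset hSV, hScard] at hsplit
    have hnot := hScard ▸ card_filter_insert_notMem_le hSV (shadow (j + 1) E)
    have hjV : j ≤ V.card := hScard ▸ Finset.card_le_card hSV
    rify [hjV] at hsplit hnot
    linarith [hbad S hS]
  refine hasFracMatching_of_hasFracMatching_link (r := k - j) (V := V) (U := U) (by omega) hm
    (fun f hf => ?_) ((Finset.filter_subset _ _).trans Finset.sdiff_subset) (fun u hu => ?_) ?_
  · obtain ⟨hfV, hfcard⟩ := subset_sdiff_and_card_of_mem_link hE hf
    exact ⟨hfV.trans Finset.sdiff_subset, hScard ▸ hfcard⟩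
  · obtain ⟨huVS, huS⟩ := Finset.mem_filter.mp hu
    rw [link_singleton_link (Finset.mem_sdiff.mp huVS).2]
    exact ih _ huS
  · rw [Nat.cast_sub hjk.le]
    linarith

theorem lt_card_of_hasFracMatching_link {k d : ℕ} {γ : ℝ} {V S : Finset A}
    {E : Finset (Finset A)} (hE : ∀ e ∈ E, e ⊆ V ∧ e.card = k) (hdk : d < k) (hγ : 0 < γ)
    (hS : S ∈ shadow d E)
    (hM : HasFracMatching (link S E) ((1 / (k : ℝ) + γ) * V.card)) :
    k < V.card := by
  obtain ⟨e, he, hSe, hScard⟩ := mem_shadow_iff_exists.mp hS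
  have hSV : S ⊆ V := hSe.trans (hE e he).1
  have hkV : k ≤ V.card := (hE e he).2 ▸ Finset.card_le_card (hE e he).1
  have hbound := hM.mul_le_card (V := V \ S) (r := k - d) fun X hX => by
    simpa [hScard] using subset_sdiff_and_card_of_mem_link hE hX
  rw [Finset.card_sdiff_of_subset hSV, hScard, Nat.cast_sub hdk.le,
    Nat.cast_sub (hdk.le.trans hkV)] at hbound
  by_contra! hVle
  have hVk : (V.card : ℝ) = k := by exact_mod_cast le_antisymm hVle hkV
  have hk0 : (0 : ℝ) < k := by exact_mod_cast (Nat.zero_le d).trans_lt hdk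
  have hkd : (d : ℝ) < k := by exact_mod_cast hdk
  rw [hVk, add_mul, one_div_mul_cancel hk0.ne'] at hbound
  nlinarith [mul_pos (mul_pos hγ hk0) (sub_pos.mpr hkd)]

theorem links_from_d_to_one_general (k d : ℕ) (hd : 1 ≤ d) (hdk : d ≤ k - 1) :
    ∃ c : ℝ, 0 < c ∧ ∀ a γ : ℝ, 0 < a → a ≤ c → 0 < γ → γ ≤ c → ∀ δ : ℝ, 0 < δ →
      ∀ (B : Type) [DecidableEq B], ∀ (V : Finset B) (E : Finset (Finset B)),
        (∀ e ∈ E, e ⊆ V ∧ e.card = k) →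
        PerturbedDegLB k d a δ V E →
        (∀ S ∈ shadow d E, HasFracMatching (link S E) ((1 / (k : ℝ) + γ) * (V.card : ℝ))) →
        ∀ S ∈ shadow 1 E, HasFracMatching (link S E) ((1 / (k : ℝ) + γ) * (V.card : ℝ)) := by
  have hk : (0 : ℝ) < k := by exact_mod_cast (by omega : 0 < k)
  refine ⟨1 / (4 * (k : ℝ) ^ 3), by positivity, ?_⟩
  intro a γ ha hac hγ hγc δ _ B _ V E hE hDeg hM S hS
  obtain ⟨e, he, -, -⟩ := mem_shadow_iff_exists.mp hS
  obtain ⟨Sd, hSde, hSdcard⟩ := Finset.exists_subset_card_eq (s := e) (n := d)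
    ((hE e he).2 ▸ (by omega))
  have hSd : Sd ∈ shadow d E := mem_shadow_iff_exists.mpr ⟨e, he, hSde, hSdcard⟩
  have hkV : k < V.card := lt_card_of_hasFracMatching_link hE (by omega) hγ hSd (hM Sd hSd)
  have hkV' : (k : ℝ) + 1 ≤ V.card := by exact_mod_cast hkV
  have hm : 1 ≤ (1 / (k : ℝ) + γ) * V.card := by
    have : 1 ≤ (V.card : ℝ) / k := (one_le_div hk).mpr (by linarith)
    rw [add_mul, one_div_mul_eq_div]
    linarith [mul_pos hγ (by linarith : (0 : ℝ) < V.card)]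
  set m := (1 / (k : ℝ) + γ) * V.card
  have hstep : ∀ j < d, 1 ≤ j → (∀ S ∈ shadow (j + 1) E, HasFracMatching (link S E) m) →
      ∀ S ∈ shadow j E, HasFracMatching (link S E) m := fun j hjd hj =>
    hasFracMatching_link_of_succ hE (by omega) hm
      (fun T hT => hDeg.card_filter_notMem_shadow_lt hjd hT)
      (sub_mul_inv_add_mul_le_one_sub_mul_sub (by exact_mod_cast hj)
        (by exact_mod_cast (by omega : j ≤ k)) hkV' ha.le hγ.le hac hγc)
  exact Nat.decreasingInduction
    (motive := fun j _ => 1 ≤ j → ∀ S ∈ shadow j E, HasFracMatching (link S E) m)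
    (fun j hjd ih hj => hstep j hjd hj (ih (by omega))) (fun _ => hM) hd le_rfl S hS

/-- from `d`-links to vertex links. -/
theorem links_from_d_to_one (k d : ℕ) (hk : 2 ≤ k) (hd : 1 ≤ d) (hdk : d ≤ k - 1) :
    ∃ c : ℝ, 0 < c ∧ ∀ a γ : ℝ, 0 < a → a ≤ c → 0 < γ → γ ≤ c → ∀ δ : ℝ, 0 < δ →
      ∀ (B : Type) [DecidableEq B], ∀ (V : Finset B) (E : Finset (Finset B)),
        (∀ e ∈ E, e ⊆ V ∧ e.card = k) →
        PerturbedDegLB k d a δ V E →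
        (∀ S ∈ shadow d E, HasFracMatching (link S E) ((1 / (k : ℝ) + γ) * (V.card : ℝ))) →
        ∀ S ∈ shadow 1 E, HasFracMatching (link S E) ((1 / (k : ℝ) + γ) * (V.card : ℝ)) :=
  links_from_d_to_one_general k d hd hdk
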